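/- arXiv:1402.0277 — 4 statements merged into one kernel-verified Lean document; each statement's English description precedes it below -/
import Mathlib

section
/- Let F be the uniform distribution function on (0,1). With norming constants a_n = 1/n, b_n = 1, the density of the normalized maximum is g_n(x) = (1 + x/n)^{n-1} for -n < x < 0. Then the Shannon entropy H(g_n) increases with n and converges to H(ψ_1) = 1, the entropy of the Weibull law with α = 1 (density ψ_1(x) = e^{x} for x < 0), and the relative entropy D(g_n‖ψ_1) converges to 0 as n → ∞. -/
open MeasureTheory Real Filter Set intervalIntegral

/-! The substitution `u = 1 + x / n` turns every integral against `g_n` into `n ∫₀¹ … du`, which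
gives `H(g_n) = 1 - 1/n` and `∫ x g_n(x) dx = -n/(n+1)` in closed form. Since `log ψ₁(x) = x` on
`(-∞, 0)`, the relative entropy is `D(g_n ‖ ψ₁) = -H(g_n) - ∫ x g_n(x) dx = 1/n - 1/(n+1)`. -/

noncomputable section

def shannonEntropy (p : ℝ → ℝ) : ℝ := -∫ x in {x | 0 < p x}, p x * log (p x)

def relEntropy (p q : ℝ → ℝ) : ℝ := ∫ x in {x | 0 < p x}, p x * log (p x / q x)

def weibullOneDensity (x : ℝ) : ℝ := if x < 0 then exp x else 0

def uniformMaxDensity (n : ℕ) (x : ℝ) : ℝ :=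
  if -(n : ℝ) < x ∧ x < 0 then (1 + x / n) ^ (n - 1) else 0

end

theorem integral_pow_mul_log_pow (k : ℕ) :
    ∫ u in (0 : ℝ)..1, u ^ k * log (u ^ k) = -k / (k + 1) ^ 2 := by
  -- with `v = u ^ (k + 1)`, `(v log v - v)' = log v · v' = (k + 1) ^ 2 u ^ k log u`
  set F : ℝ → ℝ := fun u => k / (k + 1) ^ 2 * (u ^ (k + 1) * log (u ^ (k + 1)) - u ^ (k + 1))
  have hF : Continuous F :=
    continuous_const.mul ((continuous_mul_log.comp (continuous_pow _)).sub (continuous_pow _))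
  have hderiv : ∀ u ∈ Ioo (0 : ℝ) 1, HasDerivAt F (u ^ k * log (u ^ k)) u := by
    intro u hu
    have hu0 : u ^ (k + 1) ≠ 0 := pow_ne_zero _ hu.1.ne'
    refine (((HasDerivAt.comp (h := fun v : ℝ => v ^ (k + 1)) u (hasDerivAt_mul_log hu0)
      (hasDerivAt_pow (k + 1) u)).sub
      (hasDerivAt_pow (k + 1) u)).const_mul ((k : ℝ) / (k + 1) ^ 2)).congr_deriv ?_
    simp only [log_pow, Nat.add_sub_cancel, Nat.cast_add, Nat.cast_one]
    field_simp
    ring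
  rw [integral_eq_sub_of_hasDerivAt_of_le zero_le_one hF.continuousOn hderiv
    ((continuous_mul_log.comp (continuous_pow k)).intervalIntegrable 0 1)]
  simp [F, neg_div]

theorem integral_comp_one_add_div (f : ℝ → ℝ) {c : ℝ} (hc : c ≠ 0) :
    ∫ x in -c..0, f (1 + x / c) = c * ∫ u in (0 : ℝ)..1, f u := by
  rw [integral_comp_add_div f hc, neg_div, div_self hc, zero_div, add_zero, add_neg_cancel,
    smul_eq_mul]

theorem relEntropy_weibullOneDensity {p : ℝ → ℝ} (hs : MeasurableSet {x | 0 < p x})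
    (hneg : {x | 0 < p x} ⊆ Iio 0)
    (hent : IntegrableOn (fun x => p x * log (p x)) {x | 0 < p x})
    (hmean : IntegrableOn (fun x => x * p x) {x | 0 < p x}) :
    relEntropy p weibullOneDensity = -shannonEntropy p - ∫ x in {x | 0 < p x}, x * p x := by
  have hlog : EqOn (fun x => p x * log (p x / weibullOneDensity x))
      (fun x => p x * log (p x) - x * p x) {x | 0 < p x} := by
    intro x hx
    dsimp only
    rw [weibullOneDensity, if_pos (show x < 0 from hneg hx), log_div (ne_of_gt hx) (exp_ne_zero x),
      log_exp]
    ring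
  rw [relEntropy, shannonEntropy, setIntegral_congr_fun hs hlog, integral_sub hent hmean, neg_neg]

section UniformMax

variable {n : ℕ}

theorem eqOn_uniformMaxDensity :
    EqOn (uniformMaxDensity n) (fun x => (1 + x / n) ^ (n - 1)) (Ioo (-(n : ℝ)) 0) :=
  fun _ hx => if_pos hx

theorem setOf_pos_uniformMaxDensity (hn : n ≠ 0) :
    {x | 0 < uniformMaxDensity n x} = Ioo (-(n : ℝ)) 0 := by
  ext x
  simp only [uniformMaxDensity, mem_ofPred_eq, mem_Ioo]
  split_ifs with hx
  · have hn' : (0 : ℝ) < n := by positivity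
    have : 0 < 1 + x / n := by
      rw [← neg_lt_iff_pos_add', lt_div_iff₀ hn']
      linarith [hx.1]
    simp [hx, pow_pos this]
  · simp [hx]

theorem integrableOn_uniformMaxDensity (hn : n ≠ 0) {F : ℝ → ℝ → ℝ}
    (hF : Continuous fun x => F x ((1 + x / n) ^ (n - 1))) :
    IntegrableOn (fun x => F x (uniformMaxDensity n x)) {x | 0 < uniformMaxDensity n x} := by
  rw [setOf_pos_uniformMaxDensity hn]
  refine (hF.integrableOn_Icc.mono_set Ioo_subset_Icc_self).congr_fun ?_ measurableSet_Ioo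
  intro x hx
  simp only [eqOn_uniformMaxDensity hx]

theorem setIntegral_uniformMaxDensity (hn : n ≠ 0) (F : ℝ → ℝ → ℝ) :
    ∫ x in {x | 0 < uniformMaxDensity n x}, F x (uniformMaxDensity n x) =
      ∫ x in -(n : ℝ)..0, F x ((1 + x / n) ^ (n - 1)) := by
  rw [setOf_pos_uniformMaxDensity hn, integral_of_le (by simp), integral_Ioc_eq_integral_Ioo]
  exact setIntegral_congr_fun measurableSet_Ioo fun x hx => by
    simp only [eqOn_uniformMaxDensity hx]

theorem shannonEntropy_uniformMaxDensity (hn : n ≠ 0) :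
    shannonEntropy (uniformMaxDensity n) = 1 - 1 / n := by
  obtain ⟨k, rfl⟩ := Nat.exists_eq_add_one_of_ne_zero hn
  rw [shannonEntropy, setIntegral_uniformMaxDensity hn fun _ p => p * log p, Nat.add_sub_cancel,
    integral_comp_one_add_div (fun u => u ^ k * log (u ^ k)) (by positivity),
    integral_pow_mul_log_pow]
  push_cast
  field_simp
  ring

theorem setIntegral_mul_uniformMaxDensity (hn : n ≠ 0) :
    ∫ x in {x | 0 < uniformMaxDensity n x}, x * uniformMaxDensity n x = -n / (n + 1) := by
  obtain ⟨k, rfl⟩ := Nat.exists_eq_add_one_of_ne_zero hn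
  have hk : ((k + 1 : ℕ) : ℝ) ≠ 0 := by positivity
  have hx : ∀ x : ℝ, x * (1 + x / (k + 1 : ℕ)) ^ k =
      (k + 1 : ℕ) * ((1 + x / (k + 1 : ℕ)) ^ (k + 1) - (1 + x / (k + 1 : ℕ)) ^ k) := by
    intro x
    rw [pow_succ, ← mul_sub_one, add_sub_cancel_left, mul_left_comm, mul_div_cancel₀ x hk,
      mul_comm]
  rw [setIntegral_uniformMaxDensity hn fun x p => x * p, Nat.add_sub_cancel]
  simp_rw [hx]
  rw [integral_comp_one_add_div (fun u => (k + 1 : ℕ) * (u ^ (k + 1) - u ^ k)) hk,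
    intervalIntegral.integral_const_mul,
    integral_sub (intervalIntegrable_pow _) (intervalIntegrable_pow _), integral_pow, integral_pow]
  push_cast
  field_simp
  ring

theorem relEntropy_uniformMaxDensity_weibullOneDensity (hn : n ≠ 0) :
    relEntropy (uniformMaxDensity n) weibullOneDensity = 1 / n - 1 / (n + 1) := by
  have hsupp := setOf_pos_uniformMaxDensity hn
  rw [relEntropy_weibullOneDensity (hsupp ▸ measurableSet_Ioo) (hsupp ▸ Ioo_subset_Iio_self)
    (integrableOn_uniformMaxDensity hn (F := fun _ p => p * log p)
      (continuous_mul_log.comp (by fun_prop)))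
    (integrableOn_uniformMaxDensity hn (F := fun x p => x * p) (by fun_prop)),
    shannonEntropy_uniformMaxDensity hn, setIntegral_mul_uniformMaxDensity hn]
  field_simp
  ring

end UniformMax

/-- For the uniform distribution on `(0,1)` with norming constants
`a_n = 1/n`, `b_n = 1`, the density of the normalized maximum is
`g_n x = (1 + x/n)^(n-1)` for `-n < x < 0`. The Shannon entropy `H (g n)` increases
with `n` and converges to `H(ψ₁) = 1`, the entropy of the Weibull law with `α = 1`
(density `ψ₁ x = exp x` for `x < 0`), and the relative entropy `D (g n ‖ ψ₁)`
converges to `0`. -/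
theorem entropy_max_uniform
    (g : ℕ → ℝ → ℝ)
    (hg : ∀ n x, g n x =
      if -(n : ℝ) < x ∧ x < 0 then (1 + x / n) ^ (n - 1) else 0)
    (ψ : ℝ → ℝ)
    (hψ : ∀ x, ψ x = if x < 0 then Real.exp x else 0)
    (H : (ℝ → ℝ) → ℝ)
    (hH : ∀ p, H p = -∫ x in {x | 0 < p x}, p x * Real.log (p x))
    (D : (ℝ → ℝ) → (ℝ → ℝ) → ℝ)
    (hD : ∀ p q, D p q = ∫ x in {x | 0 < p x}, p x * Real.log (p x / q x)) :
    (∀ n, 1 ≤ n → H (g n) ≤ H (g (n + 1))) ∧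
    Tendsto (fun n => H (g n)) atTop (nhds 1) ∧
    Tendsto (fun n => D (g n) ψ) atTop (nhds 0) := by
  obtain rfl : g = uniformMaxDensity := funext₂ hg
  obtain rfl : ψ = weibullOneDensity := funext hψ
  obtain rfl : H = shannonEntropy := funext hH
  obtain rfl : D = relEntropy := funext₂ hD
  have hinv : Tendsto (fun n : ℕ => 1 / (n : ℝ)) atTop (nhds 0) :=
    tendsto_one_div_atTop_nhds_zero_nat
  refine ⟨fun n hn => ?_, ?_, ?_⟩
  · rw [shannonEntropy_uniformMaxDensity (by omega),
      shannonEntropy_uniformMaxDensity n.succ_ne_zero]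
    gcongr
    simp
  · have hlim : Tendsto (fun n : ℕ => 1 - 1 / (n : ℝ)) atTop (nhds 1) := by
      simpa using tendsto_const_nhds.sub hinv
    refine hlim.congr' ?_
    filter_upwards [eventually_ne_atTop 0] with n hn
    rw [shannonEntropy_uniformMaxDensity hn]
  · have hlim : Tendsto (fun n : ℕ => 1 / (n : ℝ) - 1 / (n + 1)) atTop (nhds 0) := by
      simpa using hinv.sub tendsto_one_div_add_atTop_nhds_zero_nat
    refine hlim.congr' ?_
    filter_upwards [eventually_ne_atTop 0] with n hn
    rw [relEntropy_uniformMaxDensity_weibullOneDensity hn]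
end

section
/- Let F be the standard exponential distribution function, F(x) = 1 - e^{-x} for x ≥ 0. With norming constants a_n = 1, b_n = log n, the density of the normalized maximum is g_n(x) = n e^{-(x + log n)} (1 - e^{-(x + log n)})^{n-1} for x > -log n. Then the Shannon entropy H(g_n) increases with n and converges to H(λ) = γ + 1, the entropy of the Gumbel law, and the relative entropy D(g_n‖λ) converges to 0 as n → ∞. -/
/-!
Substituting `v = 1 - exp (-(x + log n))`, i.e. `v = F (x + log n)`, turns `g_n (x) dx` into the
Beta(n, 1) law `n v^(n-1) dv` on `(0, 1)`; at the corresponding point `g_n = n (1 - v) v^(n-1)`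
and `λ = n (1 - v) e^{-n (1 - v)}`. Both entropies thereby reduce to the elementary integrals of
`v^k`, `v^k log v` and `v^k log (1 - v)` over `(0, 1)`, which give `D(g_n ‖ λ) = 1 / (n (n + 1))`
and `H(g_n) = H_n - log n + (n - 1) / n` with `H_n` the harmonic number.
Monotonicity is then `log (1 + 1/n) ≤ 1/n`, and the limit is `H_n - log n → γ`.
-/

open MeasureTheory Real Filter Set Topology

theorem intervalIntegrable_pow_mul_log (n : ℕ) (a b : ℝ) :
    IntervalIntegrable (fun v => v ^ n * log v) volume a b :=
  intervalIntegral.intervalIntegrable_log'.continuousOn_mul (continuous_pow n).continuousOn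

theorem intervalIntegrable_pow_mul_log_one_sub (n : ℕ) (a b : ℝ) :
    IntervalIntegrable (fun v => v ^ n * log (1 - v)) volume a b := by
  have h :=
    (intervalIntegral.intervalIntegrable_log' (a := 1 - a) (b := 1 - b)).comp_sub_left 1
  simp only [sub_sub_cancel] at h
  exact h.continuousOn_mul (continuous_pow n).continuousOn

theorem integral_pow_mul_log (n : ℕ) :
    ∫ v in (0 : ℝ)..1, v ^ n * log v = -1 / (n + 1) ^ 2 := by
  let G : ℝ → ℝ := fun v => v ^ (n + 1) * log v / (n + 1) - v ^ (n + 1) / (n + 1) ^ 2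
  have hG : Continuous G := by
    have h : Continuous fun v : ℝ => v ^ n * (v * log v) := by
      have := continuous_mul_log; fun_prop
    simp only [G, pow_succ, mul_assoc]
    fun_prop
  have hG' : ∀ v ∈ Ioo (0 : ℝ) 1, HasDerivAt G (v ^ n * log v) v := by
    intro v hv
    have h : HasDerivAt G (((n + 1) * v ^ n * log v + v ^ (n + 1) * v⁻¹) / (n + 1)
        - (n + 1) * v ^ n / (n + 1) ^ 2) v := by
      have hpow : HasDerivAt (fun v : ℝ => v ^ (n + 1)) ((n + 1) * v ^ n) v := by
        simpa using hasDerivAt_pow (n + 1) v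
      exact ((hpow.mul (hasDerivAt_log hv.1.ne')).div_const _).sub (hpow.div_const _)
    refine h.congr_deriv ?_
    have : v ≠ 0 := hv.1.ne'
    field_simp
    ring
  rw [intervalIntegral.integral_eq_sub_of_hasDerivAt_of_le zero_le_one hG.continuousOn hG'
    (intervalIntegrable_pow_mul_log n 0 1)]
  simp [G, neg_div]

theorem integral_pow_mul_log_one_sub (n : ℕ) :
    ∫ v in (0 : ℝ)..1, v ^ n * log (1 - v) = -harmonic (n + 1) / (n + 1) := by
  let G : ℝ → ℝ := fun v =>
    ((v ^ (n + 1) - 1) * log (1 - v)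
      - ∑ k ∈ Finset.range (n + 1), v ^ (k + 1) / (k + 1)) / (n + 1)
  have hG : Continuous G := by
    -- `v ^ (n + 1) - 1 = (1 - v) * (-∑ v ^ k)` removes the logarithmic singularity at `v = 1`
    have h : Continuous fun v : ℝ =>
        -(∑ k ∈ Finset.range (n + 1), v ^ k) * ((1 - v) * log (1 - v)) := by
      have : Continuous fun v : ℝ => (1 - v) * log (1 - v) :=
        continuous_mul_log.comp (continuous_const.sub continuous_id)
      fun_prop
    refine Continuous.div_const (Continuous.sub (h.congr fun v => ?_) (by fun_prop)) _
    rw [← mul_assoc, neg_mul, ← mul_neg, neg_sub, geom_sum_mul]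
  have hG' : ∀ v ∈ Ioo (0 : ℝ) 1, HasDerivAt G (v ^ n * log (1 - v)) v := by
    intro v hv
    have hpow (m : ℕ) : HasDerivAt (fun v : ℝ => v ^ (m + 1)) ((m + 1) * v ^ m) v := by
      simpa using hasDerivAt_pow (m + 1) v
    have hlog : HasDerivAt (fun v : ℝ => log (1 - v)) (-(1 - v)⁻¹) v := by
      simpa [neg_div] using ((hasDerivAt_id v).const_sub 1).log (sub_ne_zero.2 hv.2.ne')
    have h : HasDerivAt G (((n + 1) * v ^ n * log (1 - v) + (v ^ (n + 1) - 1) * -(1 - v)⁻¹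
        - ∑ k ∈ Finset.range (n + 1), (k + 1) * v ^ k / (k + 1)) / (n + 1)) v :=
      ((((hpow n).sub_const 1).mul hlog).sub
        (HasDerivAt.fun_sum fun k _ => (hpow k).div_const _)).div_const _
    refine h.congr_deriv ?_
    have h1v : 1 - v ≠ 0 := sub_ne_zero.2 hv.2.ne'
    have hv1 : v - 1 ≠ 0 := sub_ne_zero.2 hv.2.ne
    have hgeom : ∑ k ∈ Finset.range (n + 1), v ^ k = (v ^ (n + 1) - 1) / (v - 1) :=
      geom_sum_eq hv.2.ne _
    rw [Finset.sum_congr rfl fun k _ => mul_div_cancel_left₀ (v ^ k) (by positivity), hgeom]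
    field_simp
    ring
  rw [intervalIntegral.integral_eq_sub_of_hasDerivAt_of_le zero_le_one hG.continuousOn hG'
    (intervalIntegrable_pow_mul_log_one_sub n 0 1)]
  simp [G, harmonic]

theorem setIntegral_Ioi_neg_log_eq {c : ℝ} (hc : 0 < c) (F : ℝ → ℝ) :
    ∫ x in Ioi (-log c), F x = ∫ v in (0 : ℝ)..1, (1 - v)⁻¹ * F (-log (c * (1 - v))) := by
  let φ : ℝ → ℝ := fun v => -log (c * (1 - v))
  have hφ : StrictMonoOn φ (Ioo 0 1) := fun a ha b hb hab =>
    neg_lt_neg (log_lt_log (mul_pos hc (sub_pos.2 hb.2)) (by nlinarith))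
  have himage : φ '' Ioo 0 1 = Ioi (-log c) := by
    ext y
    constructor
    · rintro ⟨v, hv, rfl⟩
      exact neg_lt_neg (log_lt_log (mul_pos hc (sub_pos.2 hv.2)) (by nlinarith [hv.1]))
    · intro hy
      have hey : exp (-y) < c := by
        rw [← exp_log hc]; exact exp_lt_exp.2 (by linarith [mem_Ioi.1 hy])
      refine ⟨1 - exp (-y) / c, ⟨?_, ?_⟩, ?_⟩
      · rw [sub_pos, div_lt_one hc]; exact hey
      · linarith [div_pos (exp_pos (-y)) hc]
      · simp only [φ, sub_sub_cancel, mul_div_cancel₀ _ hc.ne', log_exp, neg_neg]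
  have hφ' : ∀ v ∈ Ioo (0 : ℝ) 1, HasDerivWithinAt φ (1 - v)⁻¹ (Ioo 0 1) v := by
    intro v hv
    have h1v : 1 - v ≠ 0 := sub_ne_zero.2 hv.2.ne'
    have h := (((hasDerivAt_id' v).const_sub 1).const_mul c).log (mul_ne_zero hc.ne' h1v)
    refine (h.neg.congr_deriv ?_).hasDerivWithinAt
    field_simp
  rw [← himage, integral_image_eq_integral_abs_deriv_smul measurableSet_Ioo hφ' hφ.injOn,
    intervalIntegral.integral_of_le zero_le_one, integral_Ioc_eq_integral_Ioo]
  refine setIntegral_congr_fun measurableSet_Ioo fun v hv => ?_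
  rw [smul_eq_mul, abs_of_pos (inv_pos.2 (sub_pos.2 hv.2))]

noncomputable def expMaxDensity (n : ℕ) (x : ℝ) : ℝ :=
  if -log n < x then n * exp (-(x + log n)) * (1 - exp (-(x + log n))) ^ (n - 1) else 0

noncomputable def gumbelDensity (x : ℝ) : ℝ := exp (-x) * exp (-exp (-x))

noncomputable def differentialEntropy (p : ℝ → ℝ) : ℝ :=
  -∫ x in {x | 0 < p x}, p x * log (p x)

noncomputable def relativeEntropy (p q : ℝ → ℝ) : ℝ :=
  ∫ x in {x | 0 < p x}, p x * log (p x / q x)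

theorem setOf_expMaxDensity_pos {n : ℕ} (hn : 0 < n) :
    {x | 0 < expMaxDensity n x} = Ioi (-log n) := by
  ext x
  simp only [expMaxDensity, mem_ofPred_eq, mem_Ioi]
  split_ifs with hx
  · simp only [hx, iff_true]
    have : exp (-(x + log n)) < 1 := exp_lt_one_iff.2 (by linarith)
    have : 0 < 1 - exp (-(x + log n)) := by linarith
    positivity
  · simp [hx]

theorem expMaxDensity_neg_log (n : ℕ) {v : ℝ} (hv : v ∈ Ioo 0 1) :
    expMaxDensity (n + 1) (-log ((n + 1) * (1 - v))) = (n + 1) * (1 - v) * v ^ n := by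
  have h1v : 0 < 1 - v := sub_pos.2 hv.2
  have hlog : -log ((n + 1) * (1 - v)) + log (n + 1) = -log (1 - v) := by
    rw [log_mul (by positivity) h1v.ne']; ring
  have hpos : -log ((n : ℝ) + 1) < -log ((n + 1) * (1 - v)) := by
    linarith [log_neg h1v (sub_lt_self 1 hv.1)]
  simp only [expMaxDensity, Nat.cast_add, Nat.cast_one, add_tsub_cancel_right, if_pos hpos,
    hlog, neg_neg, exp_log h1v, sub_sub_cancel]

theorem gumbelDensity_neg_log {t : ℝ} (ht : 0 < t) : gumbelDensity (-log t) = t * exp (-t) := by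
  simp only [gumbelDensity, neg_neg, exp_log ht]

theorem integral_expMaxDensity_mul (n : ℕ) (Φ : ℝ → ℝ) :
    ∫ x in {x | 0 < expMaxDensity (n + 1) x}, expMaxDensity (n + 1) x * Φ x
      = ∫ v in (0 : ℝ)..1, (n + 1) * v ^ n * Φ (-log ((n + 1) * (1 - v))) := by
  rw [setOf_expMaxDensity_pos n.succ_pos, Nat.cast_succ,
    setIntegral_Ioi_neg_log_eq n.cast_add_one_pos]
  refine intervalIntegral.integral_congr_Ioo_of_le zero_le_one fun v hv => ?_
  have h1v : 1 - v ≠ 0 := sub_ne_zero.2 hv.2.ne'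
  rw [expMaxDensity_neg_log n hv]
  field_simp

theorem differentialEntropy_expMaxDensity (n : ℕ) :
    differentialEntropy (expMaxDensity (n + 1))
      = harmonic (n + 1) - log (n + 1) + n / (n + 1) := by
  have hn : (0 : ℝ) < n + 1 := n.cast_add_one_pos
  have hlog : EqOn
      (fun v => (n + 1) * v ^ n * log (expMaxDensity (n + 1) (-log ((n + 1) * (1 - v)))))
      (fun v => (n + 1) * log (n + 1) * v ^ n + (n + 1) * (v ^ n * log (1 - v))
        + (n + 1) * n * (v ^ n * log v)) (Ioo 0 1) := by
    intro v hv
    have h1v : 0 < 1 - v := sub_pos.2 hv.2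
    dsimp only
    rw [expMaxDensity_neg_log n hv, log_mul (by positivity) (pow_pos hv.1 n).ne',
      log_mul hn.ne' h1v.ne', log_pow]
    ring
  have h₁ : IntervalIntegrable (fun v : ℝ => (n + 1) * log (n + 1) * v ^ n) volume 0 1 :=
    (continuous_const.mul (continuous_pow n)).intervalIntegrable 0 1
  have h₂ := (intervalIntegrable_pow_mul_log_one_sub n 0 1).const_mul ((n : ℝ) + 1)
  have h₃ := (intervalIntegrable_pow_mul_log n 0 1).const_mul (((n : ℝ) + 1) * n)
  rw [differentialEntropy, (integral_expMaxDensity_mul n _ :),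
    intervalIntegral.integral_congr_Ioo_of_le zero_le_one hlog,
    intervalIntegral.integral_add (h₁.add h₂) h₃, intervalIntegral.integral_add h₁ h₂,
    intervalIntegral.integral_const_mul, intervalIntegral.integral_const_mul,
    intervalIntegral.integral_const_mul, integral_pow, integral_pow_mul_log,
    integral_pow_mul_log_one_sub]
  field_simp
  ring

theorem relativeEntropy_expMaxDensity_gumbelDensity (n : ℕ) :
    relativeEntropy (expMaxDensity (n + 1)) gumbelDensity = 1 / ((n + 1) * (n + 2)) := by
  have hlog : EqOn
      (fun v => (n + 1) * v ^ n * log (expMaxDensity (n + 1) (-log ((n + 1) * (1 - v)))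
        / gumbelDensity (-log ((n + 1) * (1 - v)))))
      (fun v => (n + 1) * n * (v ^ n * log v) + (n + 1) ^ 2 * v ^ n - (n + 1) ^ 2 * v ^ (n + 1))
      (Ioo 0 1) := by
    intro v hv
    have h1v : 0 < 1 - v := sub_pos.2 hv.2
    have hratio : (n + 1) * (1 - v) * v ^ n / ((n + 1) * (1 - v) * exp (-((n + 1) * (1 - v))))
        = v ^ n * exp ((n + 1) * (1 - v)) := by
      rw [exp_neg]; field_simp
    dsimp only
    rw [expMaxDensity_neg_log n hv, gumbelDensity_neg_log (by positivity), hratio,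
      log_mul (pow_pos hv.1 n).ne' (exp_pos _).ne', log_pow, log_exp]
    ring
  have h₁ := (intervalIntegrable_pow_mul_log n 0 1).const_mul (((n : ℝ) + 1) * n)
  have h₂ : IntervalIntegrable (fun v : ℝ => (n + 1) ^ 2 * v ^ n) volume 0 1 :=
    (continuous_const.mul (continuous_pow n)).intervalIntegrable 0 1
  have h₃ : IntervalIntegrable (fun v : ℝ => (n + 1) ^ 2 * v ^ (n + 1)) volume 0 1 :=
    (continuous_const.mul (continuous_pow (n + 1))).intervalIntegrable 0 1
  rw [relativeEntropy, (integral_expMaxDensity_mul n _ :),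
    intervalIntegral.integral_congr_Ioo_of_le zero_le_one hlog,
    intervalIntegral.integral_sub (h₁.add h₂) h₃, intervalIntegral.integral_add h₁ h₂,
    intervalIntegral.integral_const_mul, intervalIntegral.integral_const_mul,
    intervalIntegral.integral_const_mul, integral_pow, integral_pow, integral_pow_mul_log]
  push_cast
  field_simp
  ring

theorem differentialEntropy_expMaxDensity_le_succ {n : ℕ} (hn : 0 < n) :
    differentialEntropy (expMaxDensity n) ≤ differentialEntropy (expMaxDensity (n + 1)) := by
  obtain ⟨n, rfl⟩ := Nat.exists_eq_add_of_le' hn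
  rw [differentialEntropy_expMaxDensity, differentialEntropy_expMaxDensity, harmonic_succ (n + 1)]
  push_cast
  have hlog : log (n + 1 + 1) - log (n + 1) ≤ 1 / (n + 1) := by
    have h := log_le_sub_one_of_pos (show (0 : ℝ) < (n + 1 + 1) / (n + 1) by positivity)
    rw [log_div (by positivity) n.cast_add_one_ne_zero] at h
    convert h using 1
    field_simp
    ring
  have : (1 : ℝ) / (n + 1) = ((n : ℝ) + 1 + 1)⁻¹ + (n + 1) / (n + 1 + 1) - n / (n + 1) := by
    field_simp
    ring
  linarith

theorem tendsto_differentialEntropy_expMaxDensity :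
    Tendsto (fun n => differentialEntropy (expMaxDensity n)) atTop
      (𝓝 (eulerMascheroniConstant + 1)) := by
  refine (tendsto_add_atTop_iff_nat 1).1 ?_
  simp only [differentialEntropy_expMaxDensity]
  have h := (tendsto_harmonic_sub_log.comp (tendsto_add_atTop_nat 1)).add
    (tendsto_natCast_div_add_atTop (1 : ℝ))
  simpa using h

theorem tendsto_relativeEntropy_expMaxDensity_gumbelDensity :
    Tendsto (fun n => relativeEntropy (expMaxDensity n) gumbelDensity) atTop (𝓝 0) := by
  refine (tendsto_add_atTop_iff_nat 1).1 ?_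
  simp only [relativeEntropy_expMaxDensity_gumbelDensity]
  refine squeeze_zero (fun n => by positivity) (fun n => ?_)
    tendsto_one_div_add_atTop_nhds_zero_nat
  gcongr
  nlinarith

/-- For the standard exponential distribution with norming constants
`a_n = 1`, `b_n = log n`, the density of the normalized maximum is
`g_n x = n * exp (-(x + log n)) * (1 - exp (-(x + log n)))^(n-1)` for `x > -log n`.
The Shannon entropy `H (g n)` increases with `n` and converges to `H(λ) = γ + 1`,
the entropy of the Gumbel law, and the relative entropy `D (g n ‖ λ)` converges
to `0`. -/
theorem entropy_max_exponential
    (g : ℕ → ℝ → ℝ)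
    (hg : ∀ n x, g n x =
      if -Real.log n < x
        then n * Real.exp (-(x + Real.log n)) *
          (1 - Real.exp (-(x + Real.log n))) ^ (n - 1)
        else 0)
    (lam : ℝ → ℝ)
    (hlam : ∀ x, lam x = Real.exp (-x) * Real.exp (-Real.exp (-x)))
    (H : (ℝ → ℝ) → ℝ)
    (hH : ∀ p, H p = -∫ x in {x | 0 < p x}, p x * Real.log (p x))
    (D : (ℝ → ℝ) → (ℝ → ℝ) → ℝ)
    (hD : ∀ p q, D p q = ∫ x in {x | 0 < p x}, p x * Real.log (p x / q x)) :
    (∀ n, 1 ≤ n → H (g n) ≤ H (g (n + 1))) ∧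
    Tendsto (fun n => H (g n)) atTop
      (nhds (Real.eulerMascheroniConstant + 1)) ∧
    Tendsto (fun n => D (g n) lam) atTop (nhds 0) := by
  obtain rfl : g = expMaxDensity := funext₂ hg
  obtain rfl : lam = gumbelDensity := funext hlam
  obtain rfl : H = differentialEntropy := funext hH
  obtain rfl : D = relativeEntropy := funext₂ hD
  exact ⟨fun _ hn => differentialEntropy_expMaxDensity_le_succ hn,
    tendsto_differentialEntropy_expMaxDensity,
    tendsto_relativeEntropy_expMaxDensity_gumbelDensity⟩
end

section
/- Fix an integer k ≥ 1 and α > 0. The limit law of the normalized k-th upper extreme in the Fréchet case, with density φ_α^{(k)}(x) = (α/(k-1)!) x^{-αk-1} e^{-x^{-α}} for x > 0, has Shannon entropy H(φ_α^{(k)}) = -log(α/(k-1)!) - ((αk+1)/α)·(-γ + Σ_{i=1}^{k-1} 1/i) + Γ(k+1)/(k-1)!. -/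
open MeasureTheory Real Set Filter Asymptotics Topology
open scoped Nat

/-!
The substitution `t = x ^ (-α)` turns `φ_α^(k)` into the Gamma(k) density `t^(k-1) e^(-t)/(k-1)!`
and `log φ_α^(k)` into `log (α/(k-1)!) + ((αk+1)/α) log t - t`. The entropy is therefore
`-log (α/(k-1)!) - ((αk+1)/α) Γ'(k)/Γ(k) + Γ(k+1)/Γ(k)`, and `Γ'(k)/Γ(k) = -γ + H_{k-1}`.
The moment `∫ t^(s-1) log t e^(-t) = Γ'(s)` is obtained by differentiating the Gamma integral.
-/

lemma integrableOn_rpow_mul_log_mul_exp_neg {s : ℝ} (hs : 0 < s) :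
    IntegrableOn (fun t : ℝ => t ^ (s - 1) * (log t * exp (-t))) (Ioi 0) := by
  refine mellin_convergent_of_isBigO_scalar (a := s + 1) (b := s / 2) ?_ ?_ (by linarith) ?_
    (by linarith)
  · exact ((continuousOn_log.mono fun x hx => ne_of_gt hx).mul
      (continuous_exp.comp continuous_neg).continuousOn).locallyIntegrableOn measurableSet_Ioi
  · have hexp : (fun t : ℝ => exp (-t)) =O[atTop] (· ^ (-(s + 2))) := by
      simpa only [neg_one_mul] using
        (isLittleO_exp_neg_mul_rpow_atTop zero_lt_one (-(s + 2))).isBigO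
    refine ((isLittleO_log_rpow_atTop one_pos).isBigO.mul hexp).congr' .rfl ?_
    filter_upwards [eventually_gt_atTop 0] with t ht
    rw [← rpow_add ht]
    ring_nf
  · have hexp : (fun t : ℝ => exp (-t)) =O[𝓝[>] 0] (fun _ => (1 : ℝ)) :=
      isBigO_const_of_tendsto (((continuous_exp.comp continuous_neg).tendsto' 0 1
        (by simp)).mono_left nhdsWithin_le_nhds) one_ne_zero
    simpa using (isLittleO_log_rpow_nhdsGT_zero (r := -(s / 2)) (by linarith)).isBigO.mul hexp

lemma hasDerivAt_Gamma_eq_integral {s : ℝ} (hs : 0 < s) :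
    HasDerivAt Gamma (∫ t in Ioi 0, t ^ (s - 1) * (log t * exp (-t))) s := by
  have hs' : 0 < (s : ℂ).re := by simpa using hs
  have hderiv : HasDerivAt Complex.Gamma
      (∫ t : ℝ in Ioi 0, (t : ℂ) ^ ((s : ℂ) - 1) * (log t * exp (-t))) s := by
    refine (Complex.hasDerivAt_GammaIntegral hs').congr_of_eventuallyEq ?_
    filter_upwards [(isOpen_lt continuous_const Complex.continuous_re).mem_nhds hs'] with z hz
    exact Complex.Gamma_eq_integral hz
  have hint : ∫ t : ℝ in Ioi 0, (t : ℂ) ^ ((s : ℂ) - 1) * (log t * exp (-t))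
      = ((∫ t in Ioi 0, t ^ (s - 1) * (log t * exp (-t)) : ℝ) : ℂ) := by
    rw [← integral_complex_ofReal]
    refine setIntegral_congr_fun measurableSet_Ioi fun t ht => ?_
    push_cast [Complex.ofReal_cpow (le_of_lt ht)]
    rfl
  rw [hint] at hderiv
  simpa only [Complex.Gamma_ofReal, Complex.ofReal_re] using hderiv.real_of_complex

lemma integral_rpow_mul_exp_neg_mul_affine_log {s : ℝ} (hs : 0 < s) (a b : ℝ) :
    ∫ t in Ioi 0, t ^ (s - 1) * exp (-t) * (a + b * log t - t)
      = a * Gamma s + b * deriv Gamma s - Gamma (s + 1) := by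
  have hΓ := GammaIntegral_convergent hs
  have hΓ' := GammaIntegral_convergent (by linarith : 0 < s + 1)
  have hlog := integrableOn_rpow_mul_log_mul_exp_neg hs
  have hsum : IntegrableOn
      (fun t => a * (exp (-t) * t ^ (s - 1)) + b * (t ^ (s - 1) * (log t * exp (-t)))) (Ioi 0) :=
    (hΓ.const_mul a).add (hlog.const_mul b)
  have hsplit : EqOn (fun t => t ^ (s - 1) * exp (-t) * (a + b * log t - t))
      (fun t => a * (exp (-t) * t ^ (s - 1)) + b * (t ^ (s - 1) * (log t * exp (-t)))
        - exp (-t) * t ^ (s + 1 - 1)) (Ioi 0) := fun t ht => by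
    dsimp only
    rw [show s + 1 - 1 = s - 1 + 1 by ring, rpow_add_one (ne_of_gt ht)]
    ring
  rw [setIntegral_congr_fun measurableSet_Ioi hsplit,
    integral_sub hsum hΓ',
    integral_add (hΓ.const_mul a) (hlog.const_mul b), integral_const_mul, integral_const_mul,
    ← Gamma_eq_integral hs, ← Gamma_eq_integral (by linarith), (hasDerivAt_Gamma_eq_integral hs).deriv]

lemma integral_frechet_mul_log_eq {α c m : ℝ} (hα : 0 < α) (hc : 0 < c) :
    ∫ x in Ioi 0, (c * x ^ (-(α * m) - 1) * exp (-x ^ (-α))) *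
        log (c * x ^ (-(α * m) - 1) * exp (-x ^ (-α)))
      = c / α * ∫ t in Ioi 0, t ^ (m - 1) * exp (-t) * (log c + (α * m + 1) / α * log t - t) := by
  symm
  rw [← integral_const_mul, ← integral_comp_rpow_Ioi _ (neg_ne_zero.mpr hα.ne')]
  refine setIntegral_congr_fun measurableSet_Ioi fun x (hx : 0 < x) => ?_
  have hpow : x ^ (-α - 1) * (x ^ (-α)) ^ (m - 1) = x ^ (-(α * m) - 1) := by
    rw [← rpow_mul hx.le, ← rpow_add hx]
    ring_nf
  rw [smul_eq_mul, log_mul (by positivity) (exp_ne_zero _), log_mul hc.ne' (by positivity),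
    log_exp, log_rpow hx, log_rpow hx, ← hpow, abs_neg, abs_of_pos hα]
  field_simp
  ring

/-- For an integer `k ≥ 1` and `α > 0`, the limit law of the
normalized `k`-th upper extreme in the Fréchet case, with density
`φ_α^(k) x = (α/(k-1)!) x^(-αk-1) e^(-x^(-α))` for `x > 0`, has Shannon entropy
`-log (α/(k-1)!) - ((αk+1)/α) (-γ + ∑_{i=1}^{k-1} 1/i) + Γ(k+1)/(k-1)!`. -/
theorem entropy_kth_frechet (k : ℕ) (hk : 1 ≤ k) (α : ℝ) (hα : 0 < α) :
    -∫ x in Set.Ioi (0 : ℝ),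
        (α / (Nat.factorial (k - 1)) * x ^ (-(α * k) - 1) * Real.exp (-x ^ (-α))) *
          Real.log
            (α / (Nat.factorial (k - 1)) * x ^ (-(α * k) - 1) * Real.exp (-x ^ (-α)))
      = -Real.log (α / (Nat.factorial (k - 1)))
        - ((α * k + 1) / α) *
            (-Real.eulerMascheroniConstant + ∑ i ∈ Finset.Icc 1 (k - 1), (1 : ℝ) / i)
        + Real.Gamma (k + 1) / (Nat.factorial (k - 1)) := by
  obtain ⟨n, rfl⟩ : ∃ n, k = n + 1 := ⟨k - 1, by omega⟩
  have hfac : (0 : ℝ) < n ! := by positivity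
  rw [Nat.add_sub_cancel, integral_frechet_mul_log_eq hα (div_pos hα hfac),
    integral_rpow_mul_exp_neg_mul_affine_log (by positivity), Nat.cast_succ,
    Real.deriv_Gamma_nat, Real.Gamma_nat_eq_factorial, harmonic_eq_sum_Icc]
  push_cast
  field_simp
  ring
end

section
/- Fix an integer k ≥ 1. The limit law of the normalized k-th upper extreme in the Gumbel case, with density λ^{(k)}(x) = (1/(k-1)!) e^{-kx} e^{-e^{-x}} for x ∈ ℝ, has Shannon entropy H(λ^{(k)}) = log((k-1)!) - k·(-γ + Σ_{i=1}^{k-1} 1/i) + Γ(k+1)/(k-1)!. -/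
/-! Substituting `t = e^{-x}` turns `λ^{(k)}(x) dx` into the Gamma density
`t^{k-1} e^{-t} dt / (k-1)!`, and `log λ^{(k)} = -log (k-1)! + k log t - t`. The entropy therefore
reduces to the moments `∫ e^{-t} t^n = n!`, `∫ e^{-t} t^{n+1} = (n+1)!` and
`∫ e^{-t} t^n log t = Γ'(n+1) = n! (-γ + H_n)`, the last by differentiating Euler's integral
for `Γ` under the integral sign. -/

open MeasureTheory Real Set Nat Filter Asymptotics Topology

theorem integral_exp_neg_smul_comp_exp_neg {E : Type*} [NormedAddCommGroup E] [NormedSpace ℝ E]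
    (g : ℝ → E) : ∫ x, exp (-x) • g (exp (-x)) = ∫ t in Ioi 0, g t := by
  rw [integral_neg_eq_self (fun x ↦ exp x • g (exp x)), ← range_exp, ← image_univ,
    integral_image_eq_integral_abs_deriv_smul MeasurableSet.univ
      (fun x _ ↦ (hasDerivAt_exp x).hasDerivWithinAt) exp_injective.injOn g, setIntegral_univ]
  simp_rw [abs_of_pos (exp_pos _)]

theorem mellinConvergent_log_smul_exp_neg {s : ℂ} (hs : 0 < s.re) :
    MellinConvergent (fun t : ℝ ↦ log t • (exp (-t) : ℂ)) s := by
  refine (mellin_hasDerivAt_of_isBigO_rpow (a := s.re + 1) (b := 0) ?_ ?_ (lt_add_one _) ?_ hs).1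
  · exact (Continuous.continuousOn (by fun_prop)).locallyIntegrableOn measurableSet_Ioi
  · rw [← isBigO_norm_left]
    simp_rw [Complex.norm_real, isBigO_norm_left]
    simpa only [neg_one_mul] using (isLittleO_exp_neg_mul_rpow_atTop zero_lt_one _).isBigO
  · simp_rw [neg_zero, rpow_zero]
    refine isBigO_const_of_tendsto (?_ : Tendsto _ _ (𝓝 (1 : ℂ))) one_ne_zero
    rw [(by simp : (1 : ℂ) = Real.exp (-0))]
    exact (Continuous.continuousWithinAt (by fun_prop))

theorem cpow_sub_one_mul_log_mul_exp_neg_eq_ofReal (s : ℝ) {t : ℝ} (ht : 0 < t) :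
    (t : ℂ) ^ ((s : ℂ) - 1) * ((log t : ℂ) * (exp (-t) : ℂ))
      = ((exp (-t) * t ^ (s - 1) * log t : ℝ) : ℂ) := by
  rw [← Complex.ofReal_one, ← Complex.ofReal_sub, ← Complex.ofReal_cpow ht.le]
  push_cast
  ring

theorem integrableOn_exp_neg_mul_rpow_mul_log {s : ℝ} (hs : 0 < s) :
    IntegrableOn (fun t ↦ exp (-t) * t ^ (s - 1) * log t) (Ioi 0) := by
  have h : IntegrableOn _ (Ioi (0 : ℝ)) := mellinConvergent_log_smul_exp_neg (s := s) (by simpa)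
  refine h.re.congr ?_
  filter_upwards [ae_restrict_mem measurableSet_Ioi] with t ht
  simp only [smul_eq_mul, Complex.real_smul, cpow_sub_one_mul_log_mul_exp_neg_eq_ofReal s ht,
    RCLike.re_to_complex, Complex.ofReal_re]

theorem hasDerivAt_Gamma_integral_mul_log {s : ℝ} (hs : 0 < s) :
    HasDerivAt Gamma (∫ t in Ioi 0, exp (-t) * t ^ (s - 1) * log t) s := by
  have hGamma : Complex.Gamma =ᶠ[𝓝 (s : ℂ)] Complex.GammaIntegral := by
    filter_upwards [(isOpen_lt continuous_const Complex.continuous_re).mem_nhds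
      (show (0 : ℝ) < (s : ℂ).re by simpa)] with z hz using Complex.Gamma_eq_integral hz
  have hR := ((Complex.hasDerivAt_GammaIntegral (s := s) (by simpa)).congr_of_eventuallyEq
    hGamma).real_of_complex
  rw [setIntegral_congr_fun measurableSet_Ioi
      (fun t ht ↦ cpow_sub_one_mul_log_mul_exp_neg_eq_ofReal s ht), integral_complex_ofReal,
    Complex.ofReal_re] at hR
  simpa only [Complex.Gamma_ofReal, Complex.ofReal_re] using hR

theorem integrableOn_exp_neg_mul_pow (n : ℕ) :
    IntegrableOn (fun t ↦ exp (-t) * t ^ n) (Ioi 0) := by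
  simpa [rpow_natCast] using GammaIntegral_convergent (s := n + 1) (by positivity)

theorem integral_exp_neg_mul_pow (n : ℕ) : ∫ t in Ioi 0, exp (-t) * t ^ n = n ! := by
  simpa [rpow_natCast, Gamma_nat_eq_factorial] using
    (Gamma_eq_integral (s := n + 1) (by positivity)).symm

theorem integrableOn_exp_neg_mul_pow_mul_log (n : ℕ) :
    IntegrableOn (fun t ↦ exp (-t) * t ^ n * log t) (Ioi 0) := by
  simpa [rpow_natCast] using integrableOn_exp_neg_mul_rpow_mul_log (s := n + 1) (by positivity)

theorem integral_exp_neg_mul_pow_mul_log (n : ℕ) :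
    ∫ t in Ioi 0, exp (-t) * t ^ n * log t = n ! * (-eulerMascheroniConstant + harmonic n) := by
  have h := (hasDerivAt_Gamma_integral_mul_log (s := n + 1) (by positivity)).deriv
  rw [deriv_Gamma_nat] at h
  simpa [rpow_natCast] using h.symm

theorem integral_exp_neg_mul_pow_mul_add_mul_log_sub_self (n : ℕ) (a b : ℝ) :
    ∫ t in Ioi 0, exp (-t) * t ^ n * (a + b * log t - t)
      = a * n ! + b * (n ! * (-eulerMascheroniConstant + harmonic n)) - (n + 1)! := by
  have h : ∀ t, exp (-t) * t ^ n * (a + b * log t - t)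
      = a * (exp (-t) * t ^ n) + b * (exp (-t) * t ^ n * log t) - exp (-t) * t ^ (n + 1) := by
    intro t; ring
  simp_rw [h]
  rw [integral_sub, integral_add, integral_const_mul, integral_const_mul, integral_exp_neg_mul_pow,
    integral_exp_neg_mul_pow, integral_exp_neg_mul_pow_mul_log]
  · exact (integrableOn_exp_neg_mul_pow n).const_mul a
  · exact (integrableOn_exp_neg_mul_pow_mul_log n).const_mul b
  · exact ((integrableOn_exp_neg_mul_pow n).const_mul a).add
      ((integrableOn_exp_neg_mul_pow_mul_log n).const_mul b)
  · exact integrableOn_exp_neg_mul_pow (n + 1)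

/-- For an integer `k ≥ 1`, the limit law of the normalized `k`-th
upper extreme in the Gumbel case, with density
`λ^(k) x = (1/(k-1)!) e^(-kx) e^(-e^(-x))`, has Shannon entropy
`log ((k-1)!) - k (-γ + ∑_{i=1}^{k-1} 1/i) + Γ(k+1)/(k-1)!`. -/
theorem entropy_kth_gumbel (k : ℕ) (hk : 1 ≤ k) :
    -∫ x : ℝ,
        (1 / (Nat.factorial (k - 1)) * Real.exp (-(k * x)) * Real.exp (-Real.exp (-x))) *
          Real.log
            (1 / (Nat.factorial (k - 1)) * Real.exp (-(k * x)) * Real.exp (-Real.exp (-x)))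
      = Real.log (Nat.factorial (k - 1))
        - k * (-Real.eulerMascheroniConstant + ∑ i ∈ Finset.Icc 1 (k - 1), (1 : ℝ) / i)
        + Real.Gamma (k + 1) / (Nat.factorial (k - 1)) := by
  obtain ⟨n, rfl⟩ : ∃ n, k = n + 1 := ⟨k - 1, by omega⟩
  set c : ℝ := 1 / n ! with hc
  have hc_pos : 0 < c := by positivity
  have hpointwise : ∀ x : ℝ,
      c * exp (-((n + 1 : ℕ) * x)) * exp (-exp (-x)) *
          log (c * exp (-((n + 1 : ℕ) * x)) * exp (-exp (-x)))
        = exp (-x) • (c * (exp (-exp (-x)) * exp (-x) ^ n *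
            (log c + (n + 1) * log (exp (-x)) - exp (-x)))) := by
    intro x
    rw [log_mul (by positivity) (exp_pos _).ne', log_mul hc_pos.ne' (exp_pos _).ne', log_exp,
      log_exp, log_exp, ← exp_nat_mul, smul_eq_mul]
    have hsplit : exp (-((n + 1) * x)) = exp (-x) * exp (n * -x) := by rw [← exp_add]; ring_nf
    push_cast
    rw [hsplit]
    ring
  simp only [Nat.add_sub_cancel]
  rw [funext hpointwise, integral_exp_neg_smul_comp_exp_neg
      (fun t ↦ c * (exp (-t) * t ^ n * (log c + (n + 1) * log t - t))), integral_const_mul,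
    integral_exp_neg_mul_pow_mul_add_mul_log_sub_self, harmonic_eq_sum_Icc,
    Gamma_nat_eq_factorial, hc, one_div, log_inv, Nat.factorial_succ]
  push_cast
  field_simp
  ring
end
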